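/- Let F be a polynomial over ℂ of degree d ≤ n with F(0) ≠ 0 and no zeros in |t| ≤ ρ, ρ > 1. Let log F(t) = Σ_{k≥0} b_k t^k be the Taylor series of the analytic logarithm at 0, and T_m(1) = Σ_{k=0}^m b_k. Then |log F(1) - T_m(1)| ≤ n / ((m+1)(ρ-1)ρ^m) for every m ≥ 0. -/

import Mathlib

theorem taylor_tail_bound (F : Polynomial ℂ) (n : ℕ) (hd : F.natDegree ≤ n)
    (h0 : F.eval 0 ≠ 0) (ρ : ℝ) (hρ : 1 < ρ)
    (hzf : ∀ t : ℂ, ‖t‖ ≤ ρ → F.eval t ≠ 0)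
    (p : ℕ → ℂ) (hp : p = fun k => (F.roots.map fun ζ => ζ⁻¹ ^ k).sum)
    (m : ℕ) :
    ‖((-∑' k : ℕ, p (k + 1) / ((k : ℂ) + 1)) -
        (-∑ k ∈ Finset.range m, p (k + 1) / ((k : ℂ) + 1)))‖ ≤
      (n : ℝ) / ((m + 1) * (ρ - 1) * ρ ^ m) := by
  set r : ℝ := ρ⁻¹ with hrdef
  have hρ0 : (0:ℝ) < ρ := lt_trans one_pos hρ
  have hr0 : 0 < r := inv_pos.mpr hρ0
  have hr1 : r < 1 := inv_lt_one_of_one_lt₀ hρ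
  -- roots bound
  have hroot : ∀ ζ ∈ F.roots, ‖ζ⁻¹‖ ≤ r := by
    intro ζ hζ
    have hroot' := (Polynomial.mem_roots'.mp hζ).2
    have hζρ : ρ < ‖ζ‖ := by
      by_contra h
      exact hzf ζ (le_of_not_gt h) hroot'
    rw [norm_inv]
    exact inv_anti₀ hρ0 hζρ.le
  -- p bound
  have hcard : (F.roots.card : ℝ) ≤ n := by
    exact_mod_cast le_trans (Polynomial.card_roots' F) hd
  have hpk : ∀ k : ℕ, ‖p k‖ ≤ n * r ^ k := by
    intro k
    rw [hp]
    refine le_trans (norm_multiset_sum_le _) ?_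
    rw [Multiset.map_map]
    refine le_trans (Multiset.sum_le_card_nsmul _ (r ^ k) ?_) ?_
    · intro x hx
      obtain ⟨ζ, hζ, rfl⟩ := Multiset.mem_map.mp hx
      simp only [Function.comp_apply, norm_pow]
      exact pow_le_pow_left₀ (norm_nonneg _) (hroot ζ hζ) k
    · rw [Multiset.card_map]
      simp only [nsmul_eq_mul]
      exact mul_le_mul_of_nonneg_right hcard (by positivity)
  -- term bound
  set a : ℕ → ℂ := fun k => p (k + 1) / ((k : ℂ) + 1) with ha
  have hak : ∀ k : ℕ, ‖a k‖ ≤ n * r ^ (k + 1) / (k + 1) := by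
    intro k
    rw [ha]
    simp only [norm_div]
    have h1 : ‖((k : ℂ) + 1)‖ = (k : ℝ) + 1 := by norm_cast
    rw [h1]
    exact div_le_div_of_nonneg_right (hpk (k + 1)) (by positivity)
  -- summability
  have hsum : Summable a := by
    refine Summable.of_norm_bounded (g := fun k => n * r ^ k)
      ((summable_geometric_of_lt_one hr0.le hr1).mul_left _) (fun k => ?_)
    refine le_trans (hak k) ?_
    have hk : (0:ℝ) ≤ (k:ℝ) := Nat.cast_nonneg k
    calc (n:ℝ) * r ^ (k + 1) / ((k:ℝ) + 1) ≤ (n:ℝ) * r ^ (k + 1) :=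
          div_le_self (by positivity) (by linarith)
      _ ≤ (n:ℝ) * r ^ k := by
          exact mul_le_mul_of_nonneg_left
            (pow_le_pow_of_le_one hr0.le hr1.le (Nat.le_succ k)) (Nat.cast_nonneg n)
  -- rewrite difference as tail
  have key : (∑' k : ℕ, a k) - ∑ k ∈ Finset.range m, a k = ∑' k : ℕ, a (k + m) :=
    sub_eq_iff_eq_add'.mpr (hsum.sum_add_tsum_nat_add m).symm
  have hsumtail : Summable (fun k => a (k + m)) := (summable_nat_add_iff m).mpr hsum
  have habs : ‖((-∑' k : ℕ, a k) - (-∑ k ∈ Finset.range m, a k))‖ =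
      ‖∑' k : ℕ, a (k + m)‖ := by
    rw [neg_sub_neg, norm_sub_rev, key]
  rw [habs]
  -- bound the tail
  have hgsum : Summable (fun k : ℕ => (n : ℝ) * r ^ (m + 1) / (m + 1) * r ^ k) :=
    (summable_geometric_of_lt_one hr0.le hr1).mul_left _
  have hbd : ∀ k : ℕ, ‖a (k + m)‖ ≤ (n : ℝ) * r ^ (m + 1) / (m + 1) * r ^ k := by
    intro k
    refine le_trans (hak (k + m)) ?_
    have e1 : r ^ (k + m + 1) = r ^ (m + 1) * r ^ k := by ring
    rw [div_le_iff₀ (by positivity)]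
    have h3 : (m : ℝ) + 1 ≤ (k : ℝ) + m + 1 := by
      have : (0:ℝ) ≤ (k:ℝ) := Nat.cast_nonneg k
      linarith
    calc (n : ℝ) * r ^ (k + m + 1) = (n : ℝ) * r ^ (m + 1) * r ^ k := by rw [e1]; ring
      _ = (n : ℝ) * r ^ (m + 1) / (m + 1) * r ^ k * ((m : ℝ) + 1) := by
          field_simp
      _ ≤ (n : ℝ) * r ^ (m + 1) / (m + 1) * r ^ k * (((k:ℝ) + m + 1)) := by
          refine mul_le_mul_of_nonneg_left h3 (by positivity)
      _ = (n : ℝ) * r ^ (m + 1) / (m + 1) * r ^ k * (((k + m : ℕ):ℝ) + 1) := by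
          push_cast; ring
  have : ‖∑' k : ℕ, a (k + m)‖ ≤ (n : ℝ) * r ^ (m + 1) / (m + 1) * (1 - r)⁻¹ := by
    refine le_trans (norm_tsum_le_tsum_norm (hsumtail.norm)) ?_
    refine le_trans (Summable.tsum_le_tsum hbd hsumtail.norm hgsum) ?_
    rw [tsum_mul_left, tsum_geometric_of_lt_one hr0.le hr1]
  refine le_trans this (le_of_eq ?_)
  have hρne : ρ ≠ 0 := ne_of_gt hρ0
  have hρ1 : ρ - 1 ≠ 0 := sub_ne_zero.mpr (ne_of_gt hρ)
  have hm1 : ((m:ℝ) + 1) ≠ 0 := by positivity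
  have hρm : ρ ^ m ≠ 0 := pow_ne_zero m hρne
  have h1r : 1 - r = (ρ - 1) / ρ := by
    rw [hrdef]; field_simp
  rw [h1r, hrdef, inv_pow, inv_div]
  field_simp
  ring
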